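/- arXiv:1108.5357 — 2 statements merged into one kernel-verified Lean document; each statement's English description precedes it below -/
import Mathlib

section
/- Let I be the identity channel on n qubits composed with an encoding CPTP map Λ_enc : states on (C²)^{⊗nR} → states on (C²)^{⊗n} and decoding CPTP map Λ_dec : states on (C²)^{⊗n} → states on (C²)^{⊗nR}, with R > 1. Then the channel fidelity satisfies F_c(Λ_dec ∘ Λ_enc) ≤ 2^{−n(R−1)}, where F_c(E) = ⟨φ|(E ⊗ I)(|φ⟩⟨φ|)|φ⟩ with φ the maximally entangled state on (C²)^{⊗nR} ⊗ (C²)^{⊗nR}. Equivalently, F_c(Λ_dec ∘ Λ_enc) = Σ_{j,k} |tr[D_k E_j (1/2^{nR})]|² ≤ 2^{−n(R−1)} for any Kraus decompositions {E_j} of Λ_enc and {D_k} of Λ_dec. -/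
open Matrix Kronecker BigOperators
open scoped ComplexOrder

noncomputable section
attribute [local instance] Classical.propDecidable

/-- Square root of a positive semidefinite matrix (junk value `0` otherwise). -/
def msqrt {n : Type*} [Fintype n] [DecidableEq n] (ρ : Matrix n n ℂ) : Matrix n n ℂ :=
  if h : ρ.PosSemidef then
    (h.1.eigenvectorUnitary : Matrix n n ℂ) *
      Matrix.diagonal ((↑) ∘ Real.sqrt ∘ h.1.eigenvalues) *
      star (h.1.eigenvectorUnitary : Matrix n n ℂ)
  else 0

/-- The trace norm `‖M‖₁ = tr √(Mᴴ M)` of a (possibly rectangular) complex matrix. -/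
def traceNorm {n m : Type*} [Fintype n] [Fintype m] [DecidableEq m] (M : Matrix n m ℂ) : ℝ :=
  (msqrt (Mᴴ * M)).trace.re

/-- The Hilbert-Schmidt (Frobenius) norm of a complex matrix. -/
def frobNorm {n m : Type*} [Fintype n] [Fintype m] (M : Matrix n m ℂ) : ℝ :=
  Real.sqrt (∑ i, ∑ j, ‖M i j‖ ^ 2)

/-- A density operator: positive semidefinite with unit trace. -/
def IsDensity {n : Type*} [Fintype n] (ρ : Matrix n n ℂ) : Prop :=
  ρ.PosSemidef ∧ ρ.trace = 1

/-- The projector onto the support of a Hermitian matrix (junk value `0` otherwise). -/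
def suppProj {n : Type*} [Fintype n] [DecidableEq n] (ρ : Matrix n n ℂ) : Matrix n n ℂ :=
  if h : ρ.IsHermitian then
    (h.eigenvectorUnitary : Matrix n n ℂ) *
      Matrix.diagonal (fun i => if h.eigenvalues i = 0 then (0 : ℂ) else 1) *
      star (h.eigenvectorUnitary : Matrix n n ℂ)
  else 0

/-- The von Neumann entropy (base 2) of a Hermitian matrix (junk value `0` otherwise). -/
def vnEntropy {n : Type*} [Fintype n] [DecidableEq n] (ρ : Matrix n n ℂ) : ℝ :=
  if h : ρ.IsHermitian then -∑ i, h.eigenvalues i * Real.logb 2 (h.eigenvalues i) else 0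

/-- Partial trace over the second tensor factor. -/
def ptr2 {X Y : Type*} [Fintype X] [Fintype Y] (ρ : Matrix (X × Y) (X × Y) ℂ) :
    Matrix X X ℂ :=
  Matrix.of fun x x' => ∑ y, ρ (x, y) (x', y)

/-- Partial trace over the first tensor factor. -/
def ptr1 {X Y : Type*} [Fintype X] [Fintype Y] (ρ : Matrix (X × Y) (X × Y) ℂ) :
    Matrix Y Y ℂ :=
  Matrix.of fun y y' => ∑ x, ρ (x, y) (x, y')

/-- The rank-one projector `|ψ⟩⟨ψ|` associated to a vector `ψ`. -/
def pureMat {n : Type*} (ψ : n → ℂ) : Matrix n n ℂ :=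
  Matrix.vecMulVec ψ (star ψ)

/-- `ψ` is a unit vector. -/
def IsUnit' {n : Type*} [Fintype n] (ψ : n → ℂ) : Prop := ∑ z, ‖ψ z‖ ^ 2 = 1

/-- The binary entropy function with logarithms in base 2. -/
def binEnt (x : ℝ) : ℝ := -(x * Real.logb 2 x) - (1 - x) * Real.logb 2 (1 - x)

/-- The entanglement of formation of a bipartite state, as the infimum over pure-state
decompositions of the average entropy of entanglement. -/
def EoF {A B : Type*} [Fintype A] [Fintype B] [DecidableEq A]
    (ρ : Matrix (A × B) (A × B) ℂ) : ℝ :=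
  sInf { x | ∃ (m : ℕ) (p : Fin m → ℝ) (ψ : Fin m → (A × B) → ℂ),
    (∀ i, 0 < p i) ∧ (∀ i, IsUnit' (ψ i)) ∧
    ρ = ∑ i, (p i : ℂ) • pureMat (ψ i) ∧
    x = ∑ i, p i * vnEntropy (ptr2 (pureMat (ψ i))) }

/-- The alternative conditional max-entropy
`H₀(A|B)_ρ = sup_σ log tr[ρ⁰ (1 ⊗ σ)]`, supremum over density operators `σ` on `B`. -/
def H0cond {A B : Type*} [Fintype A] [Fintype B] [DecidableEq A] [DecidableEq B]
    (ρ : Matrix (A × B) (A × B) ℂ) : ℝ :=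
  sSup { x | ∃ σ : Matrix B B ℂ, IsDensity σ ∧
    x = Real.logb 2 ((suppProj ρ * ((1 : Matrix A A ℂ) ⊗ₖ σ)).trace.re) }

/-- Separability of a bipartite state. -/
def IsSep {A B : Type*} [Fintype A] [Fintype B] (ρ : Matrix (A × B) (A × B) ℂ) : Prop :=
  ∃ (N : ℕ) (q : Fin N → ℝ) (α : Fin N → Matrix A A ℂ) (β : Fin N → Matrix B B ℂ),
    (∀ i, 0 ≤ q i) ∧ (∀ i, IsDensity (α i)) ∧ (∀ i, IsDensity (β i)) ∧
    ρ = ∑ i, (q i : ℂ) • (α i ⊗ₖ β i)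

/-- `n`-fold tensor power of a matrix. -/
def tensorPow {X : Type*} (ρ : Matrix X X ℂ) (n : ℕ) :
    Matrix (Fin n → X) (Fin n → X) ℂ :=
  Matrix.of fun f g => ∏ i, ρ (f i) (g i)

/-!
By Cauchy–Schwarz for the Hilbert–Schmidt inner product, `|tr[D_k E_j]|² ≤ ‖D_k‖₂² ‖E_j‖₂²`.
Taking the trace of the completeness relations gives `Σ_j ‖E_j‖₂² = tr 1 = 2^m` and
`Σ_k ‖D_k‖₂² = 2^n`, so the channel fidelity is at most `2^n 2^m / (2^m)² = 2^n / 2^m`.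
-/

theorem frobNorm_sq {p q : Type*} [Fintype p] [Fintype q] (M : Matrix p q ℂ) :
    frobNorm M ^ 2 = ∑ i, ∑ j, ‖M i j‖ ^ 2 :=
  Real.sq_sqrt (by positivity)

theorem re_trace_conjTranspose_mul_self {p q : Type*} [Fintype p] [Fintype q]
    (M : Matrix p q ℂ) : (Mᴴ * M).trace.re = frobNorm M ^ 2 := by
  rw [frobNorm_sq, Finset.sum_comm]
  simp only [Matrix.trace, Matrix.diag, Matrix.mul_apply, Matrix.conjTranspose_apply,
    Complex.re_sum, RCLike.star_def, Complex.conj_mul', ← Complex.ofReal_pow, Complex.ofReal_re]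

theorem sum_frobNorm_sq_eq_card {ι p q : Type*} [Fintype ι] [Fintype p] [Fintype q]
    [DecidableEq q] (A : ι → Matrix p q ℂ) (hA : ∑ k, (A k)ᴴ * A k = 1) :
    ∑ k, frobNorm (A k) ^ 2 = Fintype.card q := by
  simpa [← re_trace_conjTranspose_mul_self, ← Complex.re_sum, ← Matrix.trace_sum]
    using congrArg (fun M => M.trace.re) hA

theorem norm_trace_mul_le_frobNorm_mul {p q : Type*} [Fintype p] [Fintype q]
    (A : Matrix p q ℂ) (B : Matrix q p ℂ) :
    ‖(A * B).trace‖ ≤ frobNorm A * frobNorm B := by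
  have hB : frobNorm B = √(∑ x : p × q, ‖B x.2 x.1‖ ^ 2) := by
    rw [frobNorm, Fintype.sum_prod_type, Finset.sum_comm]
  calc ‖(A * B).trace‖ = ‖∑ x : p × q, A x.1 x.2 * B x.2 x.1‖ := by
        simp only [Matrix.trace, Matrix.diag, Matrix.mul_apply, Fintype.sum_prod_type]
    _ ≤ ∑ x : p × q, ‖A x.1 x.2‖ * ‖B x.2 x.1‖ := by
        simpa only [norm_mul] using
          norm_sum_le Finset.univ fun x : p × q => A x.1 x.2 * B x.2 x.1
    _ ≤ frobNorm A * frobNorm B := by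
        rw [hB, frobNorm, ← Fintype.sum_prod_type']
        exact Real.sum_mul_le_sqrt_mul_sqrt _ _ _

theorem channel_fidelity_identity_bound_general {n m : ℕ}
    {J K : Type*} [Fintype J] [Fintype K]
    (E : J → Matrix (Fin (2 ^ n)) (Fin (2 ^ m)) ℂ)
    (D : K → Matrix (Fin (2 ^ m)) (Fin (2 ^ n)) ℂ)
    (hE : ∑ j, (E j)ᴴ * E j = 1) (hD : ∑ k, (D k)ᴴ * D k = 1) :
    ∑ j, ∑ k, ‖(D k * E j).trace / ((2 : ℂ) ^ m)‖ ^ 2 ≤ (2 : ℝ) ^ n / (2 : ℝ) ^ m := by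
  have hnorm : ‖(2 : ℂ) ^ m‖ = (2 : ℝ) ^ m := by simp
  calc ∑ j, ∑ k, ‖(D k * E j).trace / ((2 : ℂ) ^ m)‖ ^ 2
      ≤ ∑ j, ∑ k, frobNorm (D k) ^ 2 * frobNorm (E j) ^ 2 / ((2 : ℝ) ^ m) ^ 2 := by
        refine Finset.sum_le_sum fun j _ => Finset.sum_le_sum fun k _ => ?_
        rw [norm_div, hnorm, div_pow, ← mul_pow]
        gcongr
        exact norm_trace_mul_le_frobNorm_mul _ _
    _ = (∑ k, frobNorm (D k) ^ 2) * (∑ j, frobNorm (E j) ^ 2) / ((2 : ℝ) ^ m) ^ 2 := by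
        rw [Finset.sum_comm, Finset.sum_mul_sum, Finset.sum_div]
        simp only [Finset.sum_div]
    _ = (2 : ℝ) ^ n / (2 : ℝ) ^ m := by
        rw [sum_frobNorm_sq_eq_card D hD, sum_frobNorm_sq_eq_card E hE]
        simp only [Fintype.card_fin, Nat.cast_pow, Nat.cast_ofNat]
        field_simp

/-- For any Kraus decompositions `{E_j}` of an encoder from `m` qubits to
`n` qubits and `{D_k}` of a decoder back to `m` qubits (with `m = nR > n`, i.e. rate `R > 1`),
the channel fidelity `Σ_{j,k} |tr[D_k E_j (1/2^m)]|²` is at most `2^{−n(R−1)} = 2^n / 2^m`. -/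
theorem channel_fidelity_identity_bound {n m : ℕ} (hn : 0 < n) (hnm : n < m)
    {J K : Type*} [Fintype J] [Fintype K]
    (E : J → Matrix (Fin (2 ^ n)) (Fin (2 ^ m)) ℂ)
    (D : K → Matrix (Fin (2 ^ m)) (Fin (2 ^ n)) ℂ)
    (hE : ∑ j, (E j)ᴴ * E j = 1) (hD : ∑ k, (D k)ᴴ * D k = 1) :
    ∑ j, ∑ k, ‖(D k * E j).trace / ((2 : ℂ) ^ m)‖ ^ 2 ≤ (2 : ℝ) ^ n / (2 : ℝ) ^ m :=
  channel_fidelity_identity_bound_general E D hE hD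

end
end

section
/- Let ρ_AB be a positive semi-definite operator on a finite-dimensional H_A ⊗ H_B. Then the alternative conditional max-entropy is lower bounded by the conditional von Neumann entropy: H_0(A|B)_ρ ≥ H(A|B)_ρ, where H_0(A|B)_ρ = sup over density operators σ_B of log tr[ρ_AB^0(1_A ⊗ σ_B)] and H(A|B)_ρ = H(AB)_ρ − H(B)_ρ with H the von Neumann entropy. -/
open Matrix Kronecker BigOperators
open scoped ComplexOrder

noncomputable section
attribute [local instance] Classical.propDecidable

/-! Diagonalise `ρ = ∑ₖ λₖ |uₖ⟩⟨uₖ|` and `ρ_B = ∑ⱼ μⱼ |vⱼ⟩⟨vⱼ|` and put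
`cₖⱼ = ⟨uₖ| 1 ⊗ |vⱼ⟩⟨vⱼ| |uₖ⟩`. Each row of `c` is a probability vector, `μⱼ = ∑ₖ λₖ cₖⱼ`, and
`tr[ρ⁰ (1 ⊗ ρ_B)] = ∑_{λₖ ≠ 0} ∑ⱼ μⱼ cₖⱼ`. Concavity of `log`, with weights `λₖ cₖⱼ` at the points
`μⱼ / λₖ`, then gives `H(AB) - H(B) = ∑ λₖ cₖⱼ log (μⱼ / λₖ) ≤ log tr[ρ⁰ (1 ⊗ ρ_B)]`, so already
`σ = ρ_B` witnesses the bound. -/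

section Entropy

open Real

theorem sum_mul_log_sub_sum_mul_log_le_log {ι κ : Type*} [Fintype ι] [Fintype κ]
    {p : ι → ℝ} {q : κ → ℝ} {c : ι → κ → ℝ} (hp : ∀ i, 0 ≤ p i) (hp1 : ∑ i, p i = 1)
    (hc : ∀ i j, 0 ≤ c i j) (hc1 : ∀ i, ∑ j, c i j = 1) (hq : ∀ j, ∑ i, p i * c i j = q j) :
    ∑ j, q j * log (q j) - ∑ i, p i * log (p i) ≤
      log (∑ i, (if p i = 0 then 0 else 1) * ∑ j, q j * c i j) := by
  set w : ι × κ → ℝ := fun x => p x.1 * c x.1 x.2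
  set F := Finset.univ.filter fun x => 0 < w x
  have hw : ∀ x, 0 ≤ w x := fun x => mul_nonneg (hp _) (hc _ _)
  have sum_F (f : ι × κ → ℝ) : ∑ x ∈ F, w x * f x = ∑ x, w x * f x := by
    refine Finset.sum_subset (Finset.subset_univ F) fun x _ hx => ?_
    simp [F, (hw x).ge_iff_eq'] at hx
    simp [hx]
  have hp_pos : ∀ x ∈ F, 0 < p x.1 := fun x hx =>
    pos_of_mul_pos_left (Finset.mem_filter.1 hx).2 (hc _ _)
  have hq_pos : ∀ x ∈ F, 0 < q x.2 := fun x hx => by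
    refine (Finset.mem_filter.1 hx).2.trans_le ?_
    rw [← hq]
    exact Finset.single_le_sum (f := fun i => p i * c i x.2) (fun i _ => hw (i, x.2))
      (Finset.mem_univ x.1)
  have hw1 : ∑ x ∈ F, w x = 1 := by
    simpa [w, Fintype.sum_prod_type, ← Finset.mul_sum, hc1, hp1] using sum_F 1
  have jensen := strictConcaveOn_log_Ioi.concaveOn.le_map_sum (t := F)
    (p := fun x => q x.2 / p x.1) (fun x _ => hw x) hw1
    fun x hx => div_pos (hq_pos x hx) (hp_pos x hx)
  have lhs : ∑ x ∈ F, w x • log (q x.2 / p x.1) =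
      ∑ j, q j * log (q j) - ∑ i, p i * log (p i) := by
    calc ∑ x ∈ F, w x • log (q x.2 / p x.1)
        = ∑ x ∈ F, w x * (log (q x.2) - log (p x.1)) :=
          Finset.sum_congr rfl fun x hx => by
            rw [smul_eq_mul, log_div (hq_pos x hx).ne' (hp_pos x hx).ne']
      _ = ∑ x, w x * (log (q x.2) - log (p x.1)) := sum_F _
      _ = _ := by
          simp only [w, mul_sub, Finset.sum_sub_distrib, Fintype.sum_prod_type]
          congr 1
          · rw [Finset.sum_comm]
            simp only [← Finset.sum_mul, hq]
          · simp only [← Finset.sum_mul, ← Finset.mul_sum, hc1, mul_one]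
  have rhs_eq : ∑ x ∈ F, w x • (q x.2 / p x.1) = ∑ x ∈ F, c x.1 x.2 * q x.2 :=
    Finset.sum_congr rfl fun x hx => by
      simp only [w, smul_eq_mul]; field_simp [(hp_pos x hx).ne']
  have rhs_le : ∑ x ∈ F, c x.1 x.2 * q x.2 ≤
      ∑ i, (if p i = 0 then 0 else 1) * ∑ j, q j * c i j := by
    have hq0 : ∀ j, 0 ≤ q j := fun j => hq j ▸ Finset.sum_nonneg fun i _ => hw (i, j)
    calc ∑ x ∈ F, c x.1 x.2 * q x.2
        ≤ ∑ x ∈ Finset.univ.filter fun x : ι × κ => p x.1 ≠ 0, c x.1 x.2 * q x.2 :=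
          Finset.sum_le_sum_of_subset_of_nonneg
            (Finset.monotone_filter_right _ fun x _ hx => (hp_pos x (by simpa [F] using hx)).ne')
            fun x _ _ => mul_nonneg (hc _ _) (hq0 _)
      _ = _ := by
          simp only [Finset.sum_filter, Fintype.sum_prod_type, ite_not, ite_mul, zero_mul,
            one_mul, mul_comm (q _), Finset.sum_ite_irrel, Finset.sum_const_zero]
  have rhs_pos : 0 < ∑ x ∈ F, c x.1 x.2 * q x.2 := by
    refine Finset.sum_pos (fun x hx => mul_pos ?_ (hq_pos x hx))
      (Finset.nonempty_of_sum_ne_zero (hw1 ▸ one_ne_zero))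
    exact pos_of_mul_pos_right (Finset.mem_filter.1 hx).2 (hp x.1)
  rw [lhs, rhs_eq] at jensen
  exact jensen.trans (log_le_log rhs_pos rhs_le)

theorem sum_mul_logb_sub_sum_mul_logb_le_logb {ι κ : Type*} [Fintype ι] [Fintype κ] {b : ℝ}
    (hb : 1 < b) {p : ι → ℝ} {q : κ → ℝ} {c : ι → κ → ℝ} (hp : ∀ i, 0 ≤ p i)
    (hp1 : ∑ i, p i = 1) (hc : ∀ i j, 0 ≤ c i j) (hc1 : ∀ i, ∑ j, c i j = 1)
    (hq : ∀ j, ∑ i, p i * c i j = q j) :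
    ∑ j, q j * logb b (q j) - ∑ i, p i * logb b (p i) ≤
      logb b (∑ i, (if p i = 0 then 0 else 1) * ∑ j, q j * c i j) := by
  simp only [logb, ← mul_div_assoc, ← Finset.sum_div, ← sub_div]
  exact div_le_div_of_nonneg_right (sum_mul_log_sub_sum_mul_log_le_log hp hp1 hc hc1 hq)
    (log_pos hb).le

end Entropy

section PartialTrace

variable {X Y : Type*} [Fintype X] [Fintype Y]

theorem trace_ptr1 (ρ : Matrix (X × Y) (X × Y) ℂ) : (ptr1 ρ).trace = ρ.trace := by
  rw [Matrix.trace, Matrix.trace, Fintype.sum_prod_type, Finset.sum_comm]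
  rfl

theorem ptr1_eq_sum_submatrix (ρ : Matrix (X × Y) (X × Y) ℂ) :
    ptr1 ρ = ∑ x, ρ.submatrix (Prod.mk x) (Prod.mk x) := by
  ext y y'
  simp [ptr1, Matrix.sum_apply]

theorem Matrix.PosSemidef.ptr1 {ρ : Matrix (X × Y) (X × Y) ℂ}
    (hρ : ρ.PosSemidef) : (ptr1 ρ).PosSemidef := by
  rw [ptr1_eq_sum_submatrix]
  exact Matrix.posSemidef_sum _ fun x _ => hρ.submatrix _

theorem ptr1_one_kronecker_mul_mul [DecidableEq X] (M N : Matrix Y Y ℂ)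
    (ρ : Matrix (X × Y) (X × Y) ℂ) :
    ptr1 ((1 ⊗ₖ M) * ρ * (1 ⊗ₖ N)) = M * ptr1 ρ * N := by
  ext y y'
  simp only [ptr1, Matrix.of_apply, Matrix.mul_apply, kroneckerMap_apply, Matrix.one_apply,
    ite_mul, mul_ite, one_mul, zero_mul, mul_zero, Fintype.sum_prod_type, Finset.sum_ite_irrel,
    Finset.sum_const_zero, Finset.sum_ite_eq, Finset.sum_ite_eq', Finset.mem_univ, ↓reduceIte,
    Finset.sum_mul, Finset.mul_sum]
  rw [Finset.sum_comm]
  exact Finset.sum_congr rfl fun _ _ => Finset.sum_comm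

end PartialTrace

theorem Matrix.conjTranspose_mul_diagonal_mul_self_apply_self {m n : Type*} [Fintype m]
    [DecidableEq m] (W : Matrix m n ℂ) (d : m → ℝ) (k : n) :
    (Wᴴ * Matrix.diagonal (fun i => (d i : ℂ)) * W) k k =
      ((∑ i, d i * Complex.normSq (W i k) : ℝ) : ℂ) := by
  rw [Matrix.mul_apply]
  simp only [Matrix.mul_diagonal, Matrix.conjTranspose_apply, RCLike.star_def,
    Complex.ofReal_sum, Complex.ofReal_mul, Complex.normSq_eq_conj_mul_self]
  exact Finset.sum_congr rfl fun _ _ => by ring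

theorem Matrix.mul_diagonal_mul_conjTranspose_apply_self {m n : Type*} [Fintype n]
    [DecidableEq n] (W : Matrix m n ℂ) (d : n → ℝ) (i : m) :
    (W * Matrix.diagonal (fun k => (d k : ℂ)) * Wᴴ) i i =
      ((∑ k, d k * Complex.normSq (W i k) : ℝ) : ℂ) := by
  simpa using Wᴴ.conjTranspose_mul_diagonal_mul_self_apply_self d i

theorem Matrix.IsHermitian.eq_eigenvectorUnitary_mul_diagonal_mul {n : Type*} [Fintype n]
    [DecidableEq n] {M : Matrix n n ℂ} (h : M.IsHermitian) :
    M = (h.eigenvectorUnitary : Matrix n n ℂ) * Matrix.diagonal (fun i => (h.eigenvalues i : ℂ)) *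
      (h.eigenvectorUnitary : Matrix n n ℂ)ᴴ := by
  conv_lhs => rw [h.spectral_theorem, Unitary.conjStarAlgAut_apply]
  rfl

theorem Matrix.IsHermitian.eigenvectorUnitary_conjTranspose_mul_mul_apply_self {n : Type*}
    [Fintype n] [DecidableEq n] {M : Matrix n n ℂ} (h : M.IsHermitian) (i : n) :
    ((h.eigenvectorUnitary : Matrix n n ℂ)ᴴ * M * (h.eigenvectorUnitary : Matrix n n ℂ)) i i =
      h.eigenvalues i := by
  have := congrFun (congrFun h.conjStarAlgAut_star_eigenvectorUnitary i) i
  simpa [Matrix.star_eq_conjTranspose] using this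

theorem suppProj_eq {n : Type*} [Fintype n] [DecidableEq n] {M : Matrix n n ℂ}
    (h : M.IsHermitian) :
    suppProj M = (h.eigenvectorUnitary : Matrix n n ℂ) *
      Matrix.diagonal (fun i => ((if h.eigenvalues i = 0 then 0 else 1 : ℝ) : ℂ)) *
      (h.eigenvectorUnitary : Matrix n n ℂ)ᴴ := by
  rw [suppProj, dif_pos h]
  congr with i
  split_ifs <;> simp

theorem IsDensity.sum_eigenvalues {n : Type*} [Fintype n] [DecidableEq n] {ρ : Matrix n n ℂ}
    (h : IsDensity ρ) : ∑ i, h.1.1.eigenvalues i = 1 := by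
  have := h.1.1.trace_eq_sum_eigenvalues.symm.trans h.2
  simp only [← RCLike.ofReal_sum] at this
  exact RCLike.ofReal_injective (this.trans RCLike.ofReal_one.symm)

section Overlap

variable {A B : Type*} [Fintype A] [Fintype B] [DecidableEq A]

/-- For the columns `uₖ` of `U` and `vⱼ` of `V` this is `⟨uₖ| 1 ⊗ |vⱼ⟩⟨vⱼ| |uₖ⟩`. -/
def overlapWeight (U : Matrix (A × B) (A × B) ℂ) (V : Matrix B B ℂ) (k : A × B) (j : B) : ℝ :=
  ∑ a, Complex.normSq ((((1 : Matrix A A ℂ) ⊗ₖ V)ᴴ * U : Matrix (A × B) (A × B) ℂ) (a, j) k)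

theorem overlapWeight_nonneg (U : Matrix (A × B) (A × B) ℂ) (V : Matrix B B ℂ) (k : A × B)
    (j : B) : 0 ≤ overlapWeight U V k j :=
  Finset.sum_nonneg fun _ _ => Complex.normSq_nonneg _

theorem sum_overlapWeight_eq_one [DecidableEq B] {U : Matrix (A × B) (A × B) ℂ}
    {V : Matrix B B ℂ} (hU : U ∈ unitary _) (hV : V ∈ unitary _) (k : A × B) :
    ∑ j, overlapWeight U V k j = 1 := by
  have hW : ((1 : Matrix A A ℂ) ⊗ₖ V)ᴴ * U ∈ unitary _ :=
    Submonoid.mul_mem _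
      (Unitary.star_mem (Matrix.kronecker_mem_unitary (Submonoid.one_mem _) hV)) hU
  have := (((1 : Matrix A A ℂ) ⊗ₖ V)ᴴ * U).conjTranspose_mul_diagonal_mul_self_apply_self 1 k
  simp only [Pi.one_apply, Complex.ofReal_one, Matrix.diagonal_one, Matrix.mul_one, one_mul] at this
  rw [← Matrix.star_eq_conjTranspose, Unitary.star_mul_self_of_mem hW, Matrix.one_apply_eq] at this
  unfold overlapWeight
  rw [Finset.sum_comm, ← Fintype.sum_prod_type']
  exact_mod_cast this.symm

theorem sum_mul_overlapWeight_eq_conj_ptr1_apply [DecidableEq B] (U : Matrix (A × B) (A × B) ℂ)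
    (V : Matrix B B ℂ) (d : A × B → ℝ) (j : B) :
    ((∑ k, d k * overlapWeight U V k j : ℝ) : ℂ) =
      (Vᴴ * ptr1 (U * Matrix.diagonal (fun k => (d k : ℂ)) * Uᴴ) * V) j j := by
  set W : Matrix (A × B) (A × B) ℂ := ((1 : Matrix A A ℂ) ⊗ₖ V)ᴴ * U
  have hW : W * Matrix.diagonal (fun k => (d k : ℂ)) * Wᴴ =
      (1 ⊗ₖ Vᴴ) * (U * Matrix.diagonal (fun k => (d k : ℂ)) * Uᴴ) * (1 ⊗ₖ V) := by
    simp only [W, Matrix.conjTranspose_mul, Matrix.conjTranspose_conjTranspose,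
      Matrix.conjTranspose_kronecker, Matrix.conjTranspose_one, Matrix.mul_assoc]
  calc ((∑ k, d k * overlapWeight U V k j : ℝ) : ℂ)
      = ∑ a, ((∑ k, d k * Complex.normSq (W (a, j) k) : ℝ) : ℂ) := by
        unfold overlapWeight
        simp only [Finset.mul_sum]
        push_cast
        exact Finset.sum_comm
    _ = ptr1 (W * Matrix.diagonal (fun k => (d k : ℂ)) * Wᴴ) j j := by
        simp only [ptr1, Matrix.of_apply, W.mul_diagonal_mul_conjTranspose_apply_self]
    _ = _ := by rw [hW, ptr1_one_kronecker_mul_mul]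

theorem trace_conj_diagonal_mul_one_kronecker_eq_sum_overlapWeight [DecidableEq B]
    (U : Matrix (A × B) (A × B) ℂ) (V : Matrix B B ℂ) (d : A × B → ℝ) (e : B → ℝ) :
    (U * Matrix.diagonal (fun k => (d k : ℂ)) * Uᴴ *
        (1 ⊗ₖ (V * Matrix.diagonal (fun j => (e j : ℂ)) * Vᴴ))).trace =
      ((∑ k, d k * ∑ j, e j * overlapWeight U V k j : ℝ) : ℂ) := by
  set W : Matrix (A × B) (A × B) ℂ := ((1 : Matrix A A ℂ) ⊗ₖ V)ᴴ * U
  have hσ : (1 : Matrix A A ℂ) ⊗ₖ (V * Matrix.diagonal (fun j => (e j : ℂ)) * Vᴴ) =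
      (1 ⊗ₖ V) * Matrix.diagonal (fun x : A × B => (e x.2 : ℂ)) * (1 ⊗ₖ V)ᴴ := by
    have hdiag : (1 : Matrix A A ℂ) ⊗ₖ Matrix.diagonal (fun j => (e j : ℂ)) =
        Matrix.diagonal (fun x : A × B => (e x.2 : ℂ)) := by
      rw [← Matrix.diagonal_one, Matrix.diagonal_kronecker_diagonal]
      simp
    rw [Matrix.conjTranspose_kronecker, Matrix.conjTranspose_one, ← hdiag,
      ← Matrix.mul_kronecker_mul, ← Matrix.mul_kronecker_mul, Matrix.one_mul, Matrix.one_mul]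
  have hcycle : (U * Matrix.diagonal (fun k => (d k : ℂ)) * Uᴴ *
      ((1 ⊗ₖ V) * Matrix.diagonal (fun x : A × B => (e x.2 : ℂ)) * (1 ⊗ₖ V)ᴴ)).trace =
      (Matrix.diagonal (fun k => (d k : ℂ)) *
        (Wᴴ * Matrix.diagonal (fun x : A × B => (e x.2 : ℂ)) * W)).trace := by
    simp only [W, Matrix.conjTranspose_mul, Matrix.conjTranspose_conjTranspose, Matrix.mul_assoc]
    rw [Matrix.trace_mul_comm]
    simp only [Matrix.mul_assoc]
  rw [hσ, hcycle]
  simp only [Matrix.trace, Matrix.diag_apply, Matrix.diagonal_mul,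
    W.conjTranspose_mul_diagonal_mul_self_apply_self (fun x : A × B => e x.2)]
  push_cast
  refine Finset.sum_congr rfl fun k _ => ?_
  unfold overlapWeight
  rw [Fintype.sum_prod_type, Finset.sum_comm]
  simp [W, Finset.mul_sum]

end Overlap

section Bipartite

variable {A B : Type*} [Fintype A] [Fintype B] [DecidableEq A] [DecidableEq B]
  {ρ : Matrix (A × B) (A × B) ℂ}

theorem trace_suppProj_mul_one_kronecker (hρ : ρ.IsHermitian) {σ : Matrix B B ℂ}
    (hσ : σ.IsHermitian) :
    (suppProj ρ * ((1 : Matrix A A ℂ) ⊗ₖ σ)).trace =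
      ((∑ k, (if hρ.eigenvalues k = 0 then 0 else 1) * ∑ j, hσ.eigenvalues j *
        overlapWeight ↑hρ.eigenvectorUnitary ↑hσ.eigenvectorUnitary k j : ℝ) : ℂ) := by
  conv_lhs => rw [suppProj_eq hρ, hσ.eq_eigenvectorUnitary_mul_diagonal_mul]
  exact trace_conj_diagonal_mul_one_kronecker_eq_sum_overlapWeight _ _ _ _

theorem sum_eigenvalues_mul_overlapWeight_eq_eigenvalues_ptr1 (hρ : ρ.IsHermitian)
    (hB : (ptr1 ρ).IsHermitian) (j : B) :
    ∑ k, hρ.eigenvalues k * overlapWeight ↑hρ.eigenvectorUnitary ↑hB.eigenvectorUnitary k j =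
      hB.eigenvalues j := by
  apply Complex.ofReal_injective
  rw [sum_mul_overlapWeight_eq_conj_ptr1_apply, ← hρ.eq_eigenvectorUnitary_mul_diagonal_mul]
  exact hB.eigenvectorUnitary_conjTranspose_mul_mul_apply_self j

theorem re_trace_suppProj_mul_one_kronecker_mem_Icc (hρ : ρ.IsHermitian) {σ : Matrix B B ℂ}
    (hσ : IsDensity σ) :
    (suppProj ρ * ((1 : Matrix A A ℂ) ⊗ₖ σ)).trace.re ∈ Set.Icc 0 (Fintype.card (A × B) : ℝ) := by
  rw [trace_suppProj_mul_one_kronecker hρ hσ.1.1, Complex.ofReal_re]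
  set c := overlapWeight (A := A) (B := B) ↑hρ.eigenvectorUnitary ↑hσ.1.1.eigenvectorUnitary
  have hc_le : ∀ k j, c k j ≤ 1 := fun k j => by
    rw [← sum_overlapWeight_eq_one hρ.eigenvectorUnitary.2 hσ.1.1.eigenvectorUnitary.2 k]
    exact Finset.single_le_sum (fun j _ => overlapWeight_nonneg _ _ k j) (Finset.mem_univ j)
  have hinner : ∀ k, ∑ j, hσ.1.1.eigenvalues j * c k j ∈ Set.Icc (0 : ℝ) 1 := fun k =>
    ⟨Finset.sum_nonneg fun j _ =>
      mul_nonneg (hσ.1.eigenvalues_nonneg j) (overlapWeight_nonneg _ _ k j),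
     hσ.sum_eigenvalues ▸ Finset.sum_le_sum fun j _ =>
      mul_le_of_le_one_right (hσ.1.eigenvalues_nonneg j) (hc_le k j)⟩
  have hind : ∀ k, (if hρ.eigenvalues k = 0 then 0 else 1 : ℝ) ∈ Set.Icc (0 : ℝ) 1 := fun k => by
    split_ifs <;> simp
  constructor
  · exact Finset.sum_nonneg fun k _ => mul_nonneg (hind k).1 (hinner k).1
  · calc _ ≤ ∑ _k : A × B, (1 : ℝ) := Finset.sum_le_sum fun k _ =>
          mul_le_one₀ (hind k).2 (hinner k).1 (hinner k).2
      _ = _ := by simp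

theorem bddAbove_logb_trace_suppProj_mul_one_kronecker (hρ : ρ.IsHermitian) :
    BddAbove {x | ∃ σ : Matrix B B ℂ, IsDensity σ ∧
      x = Real.logb 2 ((suppProj ρ * ((1 : Matrix A A ℂ) ⊗ₖ σ)).trace.re)} := by
  refine ⟨max 0 (Real.logb 2 (Fintype.card (A × B))), ?_⟩
  rintro x ⟨σ, hσ, rfl⟩
  obtain ⟨h0, hle⟩ := re_trace_suppProj_mul_one_kronecker_mem_Icc hρ hσ
  rcases h0.eq_or_lt with h | h
  · simp [← h]
  · exact (Real.logb_le_logb_of_le one_lt_two h hle).trans (le_max_right _ _)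

end Bipartite

/-- The alternative conditional max-entropy is lower bounded by the
conditional von Neumann entropy: `H₀(A|B)_ρ ≥ H(AB)_ρ − H(B)_ρ`. -/
theorem condVN_le_H0cond {A B : Type*} [Fintype A] [Fintype B] [DecidableEq A] [DecidableEq B]
    (ρ : Matrix (A × B) (A × B) ℂ) (hρ : IsDensity ρ) :
    vnEntropy ρ - vnEntropy (ptr1 ρ) ≤ H0cond ρ := by
  have hpsd : ρ.PosSemidef := hρ.1
  have hherm : ρ.IsHermitian := hpsd.1
  have hB : IsDensity (ptr1 ρ) := ⟨hpsd.ptr1, (trace_ptr1 ρ).trans hρ.2⟩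
  have hentropy := sum_mul_logb_sub_sum_mul_logb_le_logb one_lt_two hpsd.eigenvalues_nonneg
    hρ.sum_eigenvalues (overlapWeight_nonneg _ _)
    (sum_overlapWeight_eq_one hherm.eigenvectorUnitary.2 hB.1.1.eigenvectorUnitary.2)
    (sum_eigenvalues_mul_overlapWeight_eq_eigenvalues_ptr1 hherm hB.1.1)
  calc vnEntropy ρ - vnEntropy (ptr1 ρ)
      ≤ Real.logb 2 ((suppProj ρ * ((1 : Matrix A A ℂ) ⊗ₖ ptr1 ρ)).trace.re) := by
        rw [vnEntropy, dif_pos hherm, vnEntropy, dif_pos hB.1.1,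
          trace_suppProj_mul_one_kronecker hherm hB.1.1, Complex.ofReal_re]
        linarith
    _ ≤ H0cond ρ :=
        le_csSup (bddAbove_logb_trace_suppProj_mul_one_kronecker hherm) ⟨ptr1 ρ, hB, rfl⟩

end
end
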